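/- For every n ≥ 2 and every i with 2 ≤ i ≤ n, the map σ_i = (x_i x̄_i)(a_1 ā_1)(a_2 ā_2)(y_i ȳ_i)⋯(y_n ȳ_n), which negates the literals of x_i, a_1, a_2, and y_i through y_n and fixes all other literals, is a symmetry of QUPARITY_n. -/

import Mathlib

/-! Generic framework for QBFs in prenex CNF. -/

inductive Q
  | ex
  | all
deriving DecidableEq

abbrev Lit (V : Type) := V × Bool
abbrev Clause (V : Type) := Finset (Lit V)
abbrev Cnf (V : Type) := Finset (Clause V)
abbrev QPrefix (V : Type) := List (Q × V)

variable {V : Type} [DecidableEq V]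

/-- Negation of a literal. -/
def negLit (l : Lit V) : Lit V := (l.1, !l.2)

/-- Evaluation of a literal under an assignment. -/
def evalLit (τ : V → Bool) (l : Lit V) : Bool := if l.2 then τ l.1 else !(τ l.1)

/-- An assignment satisfies a clause if some literal evaluates to true. -/
def SatClause (τ : V → Bool) (C : Clause V) : Prop := ∃ l ∈ C, evalLit τ l = true

/-- An assignment satisfies a CNF if it satisfies all clauses. -/
def SatCnf (τ : V → Bool) (φ : Cnf V) : Prop := ∀ C ∈ φ, SatClause τ C

/-- Recursive semantics of a quantifier prefix over a matrix predicate. -/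
def QTrue : QPrefix V → (V → Bool) → ((V → Bool) → Prop) → Prop
  | [], τ, M => M τ
  | (Q.ex, v) :: P, τ, M => ∃ b, QTrue P (Function.update τ v b) M
  | (Q.all, v) :: P, τ, M => ∀ b, QTrue P (Function.update τ v b) M

/-- Truth of a prenex CNF QBF (closed; the default assignment is irrelevant). -/
def QBFTrue (P : QPrefix V) (φ : Cnf V) : Prop :=
  QTrue P (fun _ => false) (fun τ => SatCnf τ φ)

/-- Two variables are in the same quantifier block of a prefix. -/
def SameBlock (P : QPrefix V) (v w : V) : Prop :=
  ∃ i j : ℕ, (∃ q : Q, P[i]? = some (q, v)) ∧ (∃ q : Q, P[j]? = some (q, w)) ∧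
    ∀ (k₁ k₂ : ℕ) (e₁ e₂ : Q × V), min i j ≤ k₁ → k₁ ≤ k₂ → k₂ ≤ max i j →
      P[k₁]? = some e₁ → P[k₂]? = some e₂ → e₁.1 = e₂.1

/-- An admissible literal map for a prefix: a bijection on literals commuting with
negation and moving variables only within their quantifier block. -/
structure Admissible (P : QPrefix V) (σ : Lit V → Lit V) : Prop where
  bij : Function.Bijective σ
  neg : ∀ l, σ (negLit l) = negLit (σ l)
  block : ∀ v w b c, σ (v, b) = (w, c) → v ≠ w → SameBlock P v w

/-- Action of a literal map on a clause. -/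
def mapClause (σ : Lit V → Lit V) (C : Clause V) : Clause V := C.image σ

/-- A (syntactic) symmetry of a QBF: an admissible map sending the clause set to itself. -/
def IsSymmetry (P : QPrefix V) (φ : Cnf V) (σ : Lit V → Lit V) : Prop :=
  Admissible P σ ∧ φ.image (mapClause σ) = φ

def IsExist (P : QPrefix V) (v : V) : Prop := (Q.ex, v) ∈ P
def IsUniv (P : QPrefix V) (v : V) : Prop := (Q.all, v) ∈ P

/-- A clause is a tautology if it contains complementary literals. -/
def Tauto (C : Clause V) : Prop := ∃ l ∈ C, negLit l ∈ C

/-- Rule R of Q-Res: resolution over an existential variable, with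
non-tautological resolvent. -/
def ResStep (P : QPrefix V) (E₁ E₂ E : Clause V) : Prop :=
  ∃ x, IsExist P x ∧ (x, true) ∈ E₁ ∧ (x, false) ∈ E₂ ∧
    E = E₁.erase (x, true) ∪ E₂.erase (x, false) ∧ ¬ Tauto E

/-- Prefix order on variables: `v` occurs strictly before `w`. -/
def LtP (P : QPrefix V) (v w : V) : Prop :=
  ∃ i j : ℕ, i < j ∧ (∃ q : Q, P[i]? = some (q, v)) ∧ (∃ q : Q, P[j]? = some (q, w))

/-- Rule U of Q-Res: universal reduction. -/
def URed (P : QPrefix V) (F₁ F : Clause V) : Prop :=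
  ∃ l, IsUniv P l.1 ∧ l ∈ F₁ ∧ negLit l ∉ F₁ ∧ F = F₁.erase l ∧
    ∀ k ∈ F₁.erase l, IsExist P k.1 → LtP P k.1 l.1

/-- Derivability in Q-Res (rules A, R, U). -/
inductive Derives (P : QPrefix V) (φ : Cnf V) : Clause V → Prop
  | ax {C : Clause V} : C ∈ φ → Derives P φ C
  | res {E₁ E₂ E : Clause V} :
      Derives P φ E₁ → Derives P φ E₂ → ResStep P E₁ E₂ E → Derives P φ E
  | ured {F₁ F : Clause V} : Derives P φ F₁ → URed P F₁ F → Derives P φ F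

/-- Derivability in Q-Res+S (rules A, R, U, S). -/
inductive DerivesS (P : QPrefix V) (φ : Cnf V) : Clause V → Prop
  | ax {C : Clause V} : C ∈ φ → DerivesS P φ C
  | res {E₁ E₂ E : Clause V} :
      DerivesS P φ E₁ → DerivesS P φ E₂ → ResStep P E₁ E₂ E → DerivesS P φ E
  | ured {F₁ F : Clause V} : DerivesS P φ F₁ → URed P F₁ F → DerivesS P φ F
  | sym {C : Clause V} {σ : Lit V → Lit V} :
      DerivesS P φ C → IsSymmetry P φ σ → DerivesS P φ (mapClause σ C)

/-- A clause available at step `i` of a derivation sequence: an input clause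
(axiom rule A, not counted as a step) or an earlier line. -/
def Avail (φ : Cnf V) (D : List (Clause V)) (i : ℕ) (C : Clause V) : Prop :=
  C ∈ φ ∨ ∃ j, ∃ _ : j < i, ∃ hj : j < D.length, D[j]'hj = C

/-- Line `C` at position `i` is justified by rule R or U from available clauses. -/
def StepOK (P : QPrefix V) (φ : Cnf V) (D : List (Clause V)) (i : ℕ) (C : Clause V) : Prop :=
  (∃ E₁ E₂, Avail φ D i E₁ ∧ Avail φ D i E₂ ∧ ResStep P E₁ E₂ C) ∨
  (∃ F₁, Avail φ D i F₁ ∧ URed P F₁ C)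

/-- Line justified by rule R, U or the symmetry rule S. -/
def StepOKS (P : QPrefix V) (φ : Cnf V) (D : List (Clause V)) (i : ℕ) (C : Clause V) : Prop :=
  StepOK P φ D i C ∨
  (∃ F₁ σ, Avail φ D i F₁ ∧ IsSymmetry P φ σ ∧ C = mapClause σ F₁)

/-- A Q-Res refutation, as a sequence of R/U steps ending in the empty clause;
its length is the number of R and U applications. -/
def IsRefutation (P : QPrefix V) (φ : Cnf V) (D : List (Clause V)) : Prop :=
  (∀ i (hi : i < D.length), StepOK P φ D i (D[i]'hi)) ∧ D.getLast? = some (∅ : Clause V)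

/-- A Q-Res+S refutation. -/
def IsRefutationS (P : QPrefix V) (φ : Cnf V) (D : List (Clause V)) : Prop :=
  (∀ i (hi : i < D.length), StepOKS P φ D i (D[i]'hi)) ∧ D.getLast? = some (∅ : Clause V)

/-- A derivation sequence using rules A, R, U: every line is an input clause or
follows from earlier lines by R or U. -/
def IsDerivation (P : QPrefix V) (φ : Cnf V) (D : List (Clause V)) : Prop :=
  ∀ i (hi : i < D.length), (D[i]'hi) ∈ φ ∨
    (∃ j k, ∃ hj : j < i, ∃ hk : k < i,
      ResStep P (D[j]'(Nat.lt_trans hj hi)) (D[k]'(Nat.lt_trans hk hi)) (D[i]'hi)) ∨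
    (∃ j, ∃ hj : j < i, URed P (D[j]'(Nat.lt_trans hj hi)) (D[i]'hi))

/-! The KBKF formula family (variables indexed 1..n). -/

inductive KV
  | x (i : ℕ)
  | y (i : ℕ)
  | a (i : ℕ)
  | z (i : ℕ)
deriving DecidableEq

/-- Prefix ∃x₁y₁∀a₁ … ∃xₙyₙ∀aₙ ∃z₁…zₙ. -/
def kPrefix (n : ℕ) : QPrefix KV :=
  ((List.range n).flatMap
    (fun j => [(Q.ex, KV.x (j+1)), (Q.ex, KV.y (j+1)), (Q.all, KV.a (j+1))])) ++
  (List.range n).map (fun j => (Q.ex, KV.z (j+1)))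

/-- The tail z̄₁ ∨ … ∨ z̄ₙ. -/
def kZneg (n : ℕ) : Clause KV := (Finset.range n).image (fun j => ((KV.z (j+1), false) : Lit KV))

/-- The clauses of KBKF_n. -/
def kbkf (n : ℕ) : Cnf KV :=
  {({(KV.x 1, false), (KV.y 1, false)} : Clause KV)} ∪
  ((Finset.range (n-1)).image (fun j =>
    ({(KV.x (j+1), true), (KV.a (j+1), false), (KV.x (j+2), false), (KV.y (j+2), false)} : Clause KV))) ∪
  ((Finset.range (n-1)).image (fun j =>
    ({(KV.y (j+1), true), (KV.a (j+1), true), (KV.x (j+2), false), (KV.y (j+2), false)} : Clause KV))) ∪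
  {({(KV.x n, true), (KV.a n, false)} : Clause KV) ∪ kZneg n,
   ({(KV.y n, true), (KV.a n, true)} : Clause KV) ∪ kZneg n} ∪
  ((Finset.range n).image (fun j => ({(KV.a (j+1), true), (KV.z (j+1), true)} : Clause KV))) ∪
  ((Finset.range n).image (fun j => ({(KV.a (j+1), false), (KV.z (j+1), true)} : Clause KV)))

/-- The symmetry σᵢ = (xᵢ yᵢ)(x̄ᵢ ȳᵢ)(aᵢ āᵢ) of KBKF_n. -/
def kSigma (i : ℕ) : Lit KV → Lit KV
  | (KV.x j, b) => if j = i then (KV.y j, b) else (KV.x j, b)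
  | (KV.y j, b) => if j = i then (KV.x j, b) else (KV.y j, b)
  | (KV.a j, b) => if j = i then (KV.a j, !b) else (KV.a j, b)
  | (KV.z j, b) => (KV.z j, b)

/-- The symmetry breaker ψₙ = (x̄₁∨y₁) ∧ … ∧ (x̄ₙ∨yₙ) for KBKF_n. -/
def kPsi (n : ℕ) : Cnf KV :=
  (Finset.range n).image (fun j => ({(KV.x (j+1), false), (KV.y (j+1), true)} : Clause KV))

/-! The QUPARITY formula family. -/

inductive PV
  | x (i : ℕ)
  | a (i : ℕ)
  | y (i : ℕ)
deriving DecidableEq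

/-- Prefix ∃x₁…xₙ ∀a₁a₂ ∃y₂…yₙ. -/
def pPrefix (n : ℕ) : QPrefix PV :=
  (List.range n).map (fun j => ((Q.ex, PV.x (j+1)) : Q × PV)) ++
  [(Q.all, PV.a 1), (Q.all, PV.a 2)] ++
  (List.range (n-1)).map (fun k => ((Q.ex, PV.y (k+2)) : Q × PV))

/-- a₁ ∨ a₂ with sign `s` (s = true: unprimed clauses, s = false: primed clauses). -/
def pAA (s : Bool) : Clause PV := {(PV.a 1, s), (PV.a 2, s)}

/-- The clauses of QUPARITY_n. -/
def quparity (n : ℕ) : Cnf PV :=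
  ((Finset.univ : Finset Bool).biUnion (fun s =>
    ({({(PV.x 1, false), (PV.x 2, false), (PV.y 2, false)} : Clause PV) ∪ pAA s,
      ({(PV.x 1, false), (PV.x 2, true), (PV.y 2, true)} : Clause PV) ∪ pAA s,
      ({(PV.x 1, true), (PV.x 2, false), (PV.y 2, true)} : Clause PV) ∪ pAA s,
      ({(PV.x 1, true), (PV.x 2, true), (PV.y 2, false)} : Clause PV) ∪ pAA s} : Cnf PV) ∪
    ((Finset.range (n-2)).biUnion (fun k =>
      ({({(PV.y (k+2), false), (PV.x (k+3), false), (PV.y (k+3), false)} : Clause PV) ∪ pAA s,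
        ({(PV.y (k+2), false), (PV.x (k+3), true), (PV.y (k+3), true)} : Clause PV) ∪ pAA s,
        ({(PV.y (k+2), true), (PV.x (k+3), false), (PV.y (k+3), true)} : Clause PV) ∪ pAA s,
        ({(PV.y (k+2), true), (PV.x (k+3), true), (PV.y (k+3), false)} : Clause PV) ∪ pAA s} : Cnf PV))))) ∪
  {({(PV.a 1, true), (PV.a 2, true), (PV.y n, true)} : Clause PV),
   ({(PV.a 1, false), (PV.a 2, false), (PV.y n, false)} : Clause PV)}

/-- The symmetry σ₁ = (x₁ x₂)(x̄₁ x̄₂) of QUPARITY_n. -/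
def pSigma1 : Lit PV → Lit PV
  | (PV.x 1, b) => (PV.x 2, b)
  | (PV.x 2, b) => (PV.x 1, b)
  | l => l

/-- The symmetry σᵢ = (xᵢ x̄ᵢ)(a₁ ā₁)(a₂ ā₂)(yᵢ ȳᵢ)⋯(yₙ ȳₙ) of QUPARITY_n, 2 ≤ i ≤ n. -/
def pSigma (n i : ℕ) : Lit PV → Lit PV
  | (PV.x j, b) => if j = i then (PV.x j, !b) else (PV.x j, b)
  | (PV.a j, b) => if j = 1 ∨ j = 2 then (PV.a j, !b) else (PV.a j, b)
  | (PV.y j, b) => if i ≤ j ∧ j ≤ n then (PV.y j, !b) else (PV.y j, b)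

/-- The symmetry breaker ψₙ = (x̄₁ ∨ x₂) ∧ x̄₂ ∧ … ∧ x̄ₙ for QUPARITY_n. -/
def pPsi (n : ℕ) : Cnf PV :=
  {({(PV.x 1, false), (PV.x 2, true)} : Clause PV)} ∪
  (Finset.range (n-1)).image (fun k => ({(PV.x (k+2), false)} : Clause PV))

/-! The modified family KBKF'_n with blocking universal variables b_j. -/

inductive KV2
  | x (i : ℕ)
  | b (i : ℕ)
  | y (i : ℕ)
  | a (i : ℕ)
  | z (i : ℕ)
deriving DecidableEq

/-- Prefix ∃x₁∀b₁∃y₁∀a₁ … ∃xₙ∀bₙ∃yₙ∀aₙ ∃z₁…zₙ of KBKF'_n. -/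
def k2Prefix (n : ℕ) : QPrefix KV2 :=
  ((List.range n).flatMap
    (fun j => [(Q.ex, KV2.x (j+1)), (Q.all, KV2.b (j+1)),
               (Q.ex, KV2.y (j+1)), (Q.all, KV2.a (j+1))])) ++
  (List.range n).map (fun j => (Q.ex, KV2.z (j+1)))

/-- The map σᵢ = (xᵢ yᵢ)(x̄ᵢ ȳᵢ)(aᵢ āᵢ) on the literals of KBKF'_n. -/
def k2Sigma (i : ℕ) : Lit KV2 → Lit KV2
  | (KV2.x j, c) => if j = i then (KV2.y j, c) else (KV2.x j, c)
  | (KV2.y j, c) => if j = i then (KV2.x j, c) else (KV2.y j, c)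
  | (KV2.a j, c) => if j = i then (KV2.a j, !c) else (KV2.a j, c)
  | (KV2.b j, c) => (KV2.b j, c)
  | (KV2.z j, c) => (KV2.z j, c)

/-! The variables negated by `σᵢ`, read as an assignment, themselves satisfy the parity chain
`y₂ = x₁ ⊕ x₂`, `yⱼ = yⱼ₋₁ ⊕ xⱼ` encoded by QUPARITY_n, and `σᵢ` negates `a₁`, `a₂` and `yₙ`
together. Negating the variables of a clause `(u, b₁) ∨ (v, b₂) ∨ (w, b₁ ⊕ b₂)` along such
a pattern yields a clause of the same shape, so `σᵢ` permutes the clauses of each group `j`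
while swapping the primed and unprimed copies, and it swaps `E₁` with `E₂`. -/

def flipLit (f : V → Bool) (l : Lit V) : Lit V := (l.1, l.2 ^^ f l.1)

omit [DecidableEq V] in
theorem flipLit_involutive (f : V → Bool) : Function.Involutive (flipLit f) := by
  rintro ⟨v, b⟩
  simp [flipLit]

omit [DecidableEq V] in
theorem flipLit_negLit (f : V → Bool) (l : Lit V) :
    flipLit f (negLit l) = negLit (flipLit f l) := by
  simp [flipLit, negLit]

omit [DecidableEq V] in
theorem admissible_flipLit (P : QPrefix V) (f : V → Bool) : Admissible P (flipLit f) where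
  bij := (flipLit_involutive f).bijective
  neg := flipLit_negLit f
  block _ _ _ _ h hvw := absurd (congrArg Prod.fst h) hvw

theorem Finset.image_eq_self_of_involutive {α : Type*} [DecidableEq α] {g : α → α}
    (hg : Function.Involutive g) {s : Finset α} (hs : ∀ a ∈ s, g a ∈ s) : s.image g = s :=
  Finset.Subset.antisymm (Finset.image_subset_iff.mpr hs) fun a ha =>
    Finset.mem_image.mpr ⟨g a, hs a ha, hg a⟩

theorem isSymmetry_flipLit {P : QPrefix V} {φ : Cnf V} {f : V → Bool}
    (hφ : ∀ C ∈ φ, mapClause (flipLit f) C ∈ φ) : IsSymmetry P φ (flipLit f) := by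
  refine ⟨admissible_flipLit P f, Finset.image_eq_self_of_involutive (fun C => ?_) hφ⟩
  simp [mapClause, Finset.image_image, (flipLit_involutive f).comp_self]

theorem mapClause_union (σ : Lit V → Lit V) (C D : Clause V) :
    mapClause σ (C ∪ D) = mapClause σ C ∪ mapClause σ D :=
  Finset.image_union C D

/-- For fixed `u v w`, the four clauses `xorClause u v w b₁ b₂` together say `w = u ⊕ v`;
the clauses `A_j, B_j, C_j, D_j` are these for `(u, v, w) = (yⱼ₋₁, xⱼ, yⱼ)` (`x₁` for `y₁`),
each joined with `a₁ ∨ a₂`. -/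
def xorClause (u v w : V) (b₁ b₂ : Bool) : Clause V := {(u, b₁), (v, b₂), (w, b₁ ^^ b₂)}

theorem mapClause_flipLit_xorClause {f : V → Bool} {u v w : V} (hw : f w = (f u ^^ f v))
    (b₁ b₂ : Bool) :
    mapClause (flipLit f) (xorClause u v w b₁ b₂) = xorClause u v w (b₁ ^^ f u) (b₂ ^^ f v) := by
  simp only [mapClause, xorClause, flipLit, Finset.image_insert, Finset.image_singleton, hw]
  rw [Bool.xor_assoc, Bool.xor_assoc, Bool.xor_left_comm b₂]

theorem mapClause_flipLit_pAA {f : PV → Bool} {c : Bool} (h₁ : f (PV.a 1) = c)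
    (h₂ : f (PV.a 2) = c) (s : Bool) : mapClause (flipLit f) (pAA s) = pAA (s ^^ c) := by
  simp [mapClause, pAA, flipLit, h₁, h₂]

theorem mem_quparity {n : ℕ} {C : Clause PV} :
    C ∈ quparity n ↔
      (∃ b₁ b₂ s, C = xorClause (PV.x 1) (PV.x 2) (PV.y 2) b₁ b₂ ∪ pAA s) ∨
      (∃ k b₁ b₂ s, k + 3 ≤ n ∧
        C = xorClause (PV.y (k + 2)) (PV.x (k + 3)) (PV.y (k + 3)) b₁ b₂ ∪ pAA s) ∨
      ∃ b, C = {(PV.a 1, b), (PV.a 2, b), (PV.y n, b)} := by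
  simp only [quparity, Finset.mem_union, Finset.mem_biUnion, Finset.mem_univ, true_and,
    Finset.mem_insert, Finset.mem_singleton, Finset.mem_range]
  constructor
  · rintro (⟨s, (h | h | h | h) | ⟨k, hk, (h | h | h | h)⟩⟩ | h | h) <;> subst h
    all_goals first
      | exact Or.inl ⟨_, _, s, rfl⟩
      | exact Or.inr (Or.inl ⟨k, _, _, s, by omega, rfl⟩)
      | exact Or.inr (Or.inr ⟨_, rfl⟩)
  · rintro (⟨b₁, b₂, s, rfl⟩ | ⟨k, b₁, b₂, s, hk, rfl⟩ | ⟨b, rfl⟩)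
    · exact Or.inl ⟨s, Or.inl (by cases b₁ <;> cases b₂ <;> simp [xorClause])⟩
    · exact Or.inl ⟨s, Or.inr ⟨k, by omega, by cases b₁ <;> cases b₂ <;> simp [xorClause]⟩⟩
    · cases b <;> simp

theorem mapClause_flipLit_mem_quparity {n : ℕ} {f : PV → Bool}
    (hy₂ : f (PV.y 2) = (f (PV.x 1) ^^ f (PV.x 2)))
    (hy : ∀ k, k + 3 ≤ n → f (PV.y (k + 3)) = (f (PV.y (k + 2)) ^^ f (PV.x (k + 3))))
    (ha₁ : f (PV.a 1) = f (PV.y n)) (ha₂ : f (PV.a 2) = f (PV.y n))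
    {C : Clause PV} (hC : C ∈ quparity n) : mapClause (flipLit f) C ∈ quparity n := by
  have hAA := mapClause_flipLit_pAA ha₁ ha₂
  rw [mem_quparity] at hC ⊢
  rcases hC with ⟨b₁, b₂, s, rfl⟩ | ⟨k, b₁, b₂, s, hk, rfl⟩ | ⟨b, rfl⟩
  · refine Or.inl ⟨b₁ ^^ f (PV.x 1), b₂ ^^ f (PV.x 2), s ^^ f (PV.y n), ?_⟩
    rw [mapClause_union, mapClause_flipLit_xorClause hy₂, hAA]
  · refine Or.inr (Or.inl ⟨k, b₁ ^^ f (PV.y (k + 2)), b₂ ^^ f (PV.x (k + 3)),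
      s ^^ f (PV.y n), hk, ?_⟩)
    rw [mapClause_union, mapClause_flipLit_xorClause (hy k hk), hAA]
  · exact Or.inr (Or.inr ⟨b ^^ f (PV.y n), by simp [mapClause, flipLit, ha₁, ha₂]⟩)

def pSigmaFlip (n i : ℕ) : PV → Bool
  | PV.x j => decide (j = i)
  | PV.a j => decide (j = 1 ∨ j = 2)
  | PV.y j => decide (i ≤ j ∧ j ≤ n)

theorem pSigma_eq_flipLit (n i : ℕ) : pSigma n i = flipLit (pSigmaFlip n i) := by
  funext ⟨v, b⟩
  cases v <;> simp only [pSigma, flipLit, pSigmaFlip] <;> split_ifs with h <;>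
    simp only [h, and_self, decide_true, decide_false, Bool.xor_true, Bool.xor_false]

theorem pSigmaFlip_y_two {n i : ℕ} (hi₂ : 2 ≤ i) (hin : i ≤ n) :
    pSigmaFlip n i (PV.y 2) = (pSigmaFlip n i (PV.x 1) ^^ pSigmaFlip n i (PV.x 2)) := by
  simp only [pSigmaFlip]
  grind

theorem pSigmaFlip_y_succ (n i k : ℕ) (hk : k + 3 ≤ n) :
    pSigmaFlip n i (PV.y (k + 3)) =
      (pSigmaFlip n i (PV.y (k + 2)) ^^ pSigmaFlip n i (PV.x (k + 3))) := by
  simp only [pSigmaFlip]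
  grind

theorem pSigmaFlip_a {n i j : ℕ} (hj : j = 1 ∨ j = 2) (hin : i ≤ n) :
    pSigmaFlip n i (PV.a j) = pSigmaFlip n i (PV.y n) := by
  simp [pSigmaFlip, hj, hin]

/-- each σᵢ (2 ≤ i ≤ n) is a symmetry of QUPARITY_n. -/
theorem pSigma_isSymmetry : ∀ n i : ℕ, 2 ≤ n → 2 ≤ i → i ≤ n →
    IsSymmetry (pPrefix n) (quparity n) (pSigma n i) := by
  intro n i _ hi₂ hin
  rw [pSigma_eq_flipLit]
  exact isSymmetry_flipLit fun _ => mapClause_flipLit_mem_quparity (pSigmaFlip_y_two hi₂ hin)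
    (pSigmaFlip_y_succ n i) (pSigmaFlip_a (.inl rfl) hin) (pSigmaFlip_a (.inr rfl) hin)
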